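/- arXiv:1508.04875 — 3 statements merged into one kernel-verified Lean document; each statement's English description precedes it below -/
import Mathlib

section
/- Let f : ℝ² → ℝ be convex on the co-ordinates on Δ = [a,b] × [c,d] (with a < b, c < d), i.e. for every fixed y ∈ [c,d] the map x ↦ f(x,y) is convex on [a,b] and for every fixed x ∈ [a,b] the map y ↦ f(x,y) is convex on [c,d], and assume f is integrable on Δ and its partial maps are integrable. Then the following chain of inequalities holds: f((a+b)/2, (c+d)/2) ≤ (1/2)[(1/(b-a))∫_a^b f(x,(c+d)/2) dx + (1/(d-c))∫_c^d f((a+b)/2, y) dy] ≤ (1/((b-a)(d-c)))∫_a^b ∫_c^d f(x,y) dy dx ≤ (1/4)[(1/(b-a))∫_a^b f(x,c) dx + (1/(b-a))∫_a^b f(x,d) dx + (1/(d-c))∫_c^d f(a,y) dy + (1/(d-c))∫_c^d f(b,y) dy] ≤ (f(a,c)+f(a,d)+f(b,c)+f(b,d))/4. -/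
open MeasureTheory intervalIntegral

lemma hh_left' (a b : ℝ) (hab : a < b) (g : ℝ → ℝ)
    (hg : ConvexOn ℝ (Set.Icc a b) g)
    (hgi : IntervalIntegrable g volume a b) :
    (b - a) * g ((a + b) / 2) ≤ ∫ x in a..b, g x := by
  have hrefl : IntervalIntegrable (fun x => g (a + b - x)) volume a b := by
    have := (hgi.comp_sub_left (a + b)).symm
    simpa using this
  have key : ∀ x ∈ Set.Icc a b, (fun _ : ℝ => 2 * g ((a + b) / 2)) x
      ≤ g x + g (a + b - x) := by
    intro x hx
    have hx' : a + b - x ∈ Set.Icc a b := ⟨by linarith [hx.2], by linarith [hx.1]⟩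
    have h := hg.2 hx hx' (by norm_num : (0:ℝ) ≤ 1/2) (by norm_num : (0:ℝ) ≤ 1/2)
      (by norm_num)
    simp only [smul_eq_mul] at h
    have hmid : (1/2 : ℝ) * x + (1/2) * (a + b - x) = (a + b) / 2 := by ring
    rw [hmid] at h
    linarith
  have h1 := integral_mono_on hab.le intervalIntegrable_const (hgi.add hrefl) key
  rw [intervalIntegral.integral_const, integral_add hgi hrefl, smul_eq_mul] at h1
  have hI : (∫ x in a..b, g (a + b - x)) = ∫ x in a..b, g x := by
    simpa using integral_comp_sub_left g (a + b)
  rw [hI] at h1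
  linarith

lemma hh_left (a b : ℝ) (hab : a < b) (g : ℝ → ℝ)
    (hg : ConvexOn ℝ (Set.Icc a b) g)
    (hgi : IntervalIntegrable g volume a b) :
    g ((a + b) / 2) ≤ (1 / (b - a)) * ∫ x in a..b, g x := by
  have hba : (0:ℝ) < b - a := by linarith
  have := hh_left' a b hab g hg hgi
  rw [one_div, inv_mul_eq_div, le_div_iff₀ hba]
  linarith

lemma hh_right' (a b : ℝ) (hab : a < b) (g : ℝ → ℝ)
    (hg : ConvexOn ℝ (Set.Icc a b) g)
    (hgi : IntervalIntegrable g volume a b) :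
    (∫ x in a..b, g x) ≤ (b - a) * ((g a + g b) / 2) := by
  have hba : (0:ℝ) < b - a := by linarith
  have hrefl : IntervalIntegrable (fun x => g (a + b - x)) volume a b := by
    have := (hgi.comp_sub_left (a + b)).symm
    simpa using this
  have key : ∀ x ∈ Set.Icc a b, g x + g (a + b - x)
      ≤ (fun _ : ℝ => g a + g b) x := by
    intro x hx
    set t := (b - x) / (b - a) with ht
    have ht0 : 0 ≤ t := div_nonneg (by linarith [hx.2]) hba.le
    have ht1 : 0 ≤ 1 - t := by
      have : t ≤ 1 := (div_le_one hba).2 (by linarith [hx.1])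
      linarith
    have ha : a ∈ Set.Icc a b := Set.left_mem_Icc.2 hab.le
    have hb : b ∈ Set.Icc a b := Set.right_mem_Icc.2 hab.le
    have e1 : t • a + (1 - t) • b = x := by
      simp only [smul_eq_mul, ht]; field_simp; ring
    have e2 : (1 - t) • a + t • b = a + b - x := by
      simp only [smul_eq_mul, ht]; field_simp; ring
    have h1 := hg.2 ha hb ht0 ht1 (by ring)
    have h2 := hg.2 ha hb ht1 ht0 (by ring)
    rw [e1] at h1; rw [e2] at h2
    simp only [smul_eq_mul] at h1 h2
    simp only []
    nlinarith
  have h1 := integral_mono_on hab.le (hgi.add hrefl) intervalIntegrable_const key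
  rw [intervalIntegral.integral_const, integral_add hgi hrefl, smul_eq_mul] at h1
  have hI : (∫ x in a..b, g (a + b - x)) = ∫ x in a..b, g x := by
    simpa using integral_comp_sub_left g (a + b)
  rw [hI] at h1
  linarith

lemma hh_right (a b : ℝ) (hab : a < b) (g : ℝ → ℝ)
    (hg : ConvexOn ℝ (Set.Icc a b) g)
    (hgi : IntervalIntegrable g volume a b) :
    (1 / (b - a)) * ∫ x in a..b, g x ≤ (g a + g b) / 2 := by
  have hba : (0:ℝ) < b - a := by linarith
  have := hh_right' a b hab g hg hgi
  rw [one_div, inv_mul_eq_div, div_le_iff₀ hba]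
  linarith

lemma int_add_const (u v : ℝ) (g : ℝ → ℝ) (hg : IntervalIntegrable g volume u v) (k : ℝ) :
    (∫ x in u..v, g x + k) = (∫ x in u..v, g x) + (v - u) * k := by
  rw [intervalIntegral.integral_add hg intervalIntegrable_const,
    intervalIntegral.integral_const, smul_eq_mul]

/-- Hermite–Hadamard inequality for co-ordinated convex functions on a rectangle
(Dragomir). -/
theorem hadamard_coordinated_convex
    (a b c d : ℝ) (hab : a < b) (hcd : c < d) (f : ℝ → ℝ → ℝ)
    (hconvx : ∀ y ∈ Set.Icc c d, ConvexOn ℝ (Set.Icc a b) (fun x => f x y))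
    (hconvy : ∀ x ∈ Set.Icc a b, ConvexOn ℝ (Set.Icc c d) (fun y => f x y))
    (hint : IntegrableOn (fun p : ℝ × ℝ => f p.1 p.2)
      (Set.Icc a b ×ˢ Set.Icc c d) volume)
    (hintx : ∀ y ∈ Set.Icc c d, IntervalIntegrable (fun x => f x y) volume a b)
    (hinty : ∀ x ∈ Set.Icc a b, IntervalIntegrable (fun y => f x y) volume c d) :
    f ((a + b) / 2) ((c + d) / 2) ≤
      (1 / 2) * ((1 / (b - a)) * ∫ x in a..b, f x ((c + d) / 2)
        + (1 / (d - c)) * ∫ y in c..d, f ((a + b) / 2) y) ∧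
    (1 / 2) * ((1 / (b - a)) * ∫ x in a..b, f x ((c + d) / 2)
        + (1 / (d - c)) * ∫ y in c..d, f ((a + b) / 2) y) ≤
      (1 / ((b - a) * (d - c))) * ∫ x in a..b, ∫ y in c..d, f x y ∧
    (1 / ((b - a) * (d - c))) * ∫ x in a..b, ∫ y in c..d, f x y ≤
      (1 / 4) * ((1 / (b - a)) * ∫ x in a..b, f x c
        + (1 / (b - a)) * ∫ x in a..b, f x d
        + (1 / (d - c)) * ∫ y in c..d, f a y
        + (1 / (d - c)) * ∫ y in c..d, f b y) ∧
    (1 / 4) * ((1 / (b - a)) * ∫ x in a..b, f x c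
        + (1 / (b - a)) * ∫ x in a..b, f x d
        + (1 / (d - c)) * ∫ y in c..d, f a y
        + (1 / (d - c)) * ∫ y in c..d, f b y) ≤
      (f a c + f a d + f b c + f b d) / 4 := by
  have hab' : (0:ℝ) < b - a := by linarith
  have hcd' : (0:ℝ) < d - c := by linarith
  have hm : (a + b) / 2 ∈ Set.Icc a b := ⟨by linarith, by linarith⟩
  have hn : (c + d) / 2 ∈ Set.Icc c d := ⟨by linarith, by linarith⟩
  have hcc : c ∈ Set.Icc c d := Set.left_mem_Icc.2 hcd.le
  have hdd : d ∈ Set.Icc c d := Set.right_mem_Icc.2 hcd.le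
  have haa : a ∈ Set.Icc a b := Set.left_mem_Icc.2 hab.le
  have hbb : b ∈ Set.Icc a b := Set.right_mem_Icc.2 hab.le
  have hprod : Integrable (fun p : ℝ × ℝ => f p.1 p.2)
      ((volume.restrict (Set.Icc a b)).prod (volume.restrict (Set.Icc c d))) := by
    rw [Measure.prod_restrict]
    rwa [IntegrableOn, Measure.volume_eq_prod] at hint
  have heqY : ∀ x : ℝ, (∫ y in c..d, f x y) = ∫ y in Set.Icc c d, f x y := fun x => by
    rw [intervalIntegral.integral_of_le hcd.le, ← integral_Icc_eq_integral_Ioc]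
  have heqX : ∀ y : ℝ, (∫ x in a..b, f x y) = ∫ x in Set.Icc a b, f x y := fun y => by
    rw [intervalIntegral.integral_of_le hab.le, ← integral_Icc_eq_integral_Ioc]
  have hG1 : IntervalIntegrable (fun x => ∫ y in c..d, f x y) volume a b := by
    rw [intervalIntegrable_iff_integrableOn_Icc_of_le hab.le]
    simp only [heqY]
    exact hprod.integral_prod_left
  have hG2 : IntervalIntegrable (fun y => ∫ x in a..b, f x y) volume c d := by
    rw [intervalIntegrable_iff_integrableOn_Icc_of_le hcd.le]
    simp only [heqX]
    exact hprod.integral_prod_right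
  have hswap : (∫ x in a..b, ∫ y in c..d, f x y) = ∫ y in c..d, ∫ x in a..b, f x y := by
    simp only [heqY, heqX]
    rw [intervalIntegral.integral_of_le hab.le, ← integral_Icc_eq_integral_Ioc,
      intervalIntegral.integral_of_le hcd.le, ← integral_Icc_eq_integral_Ioc]
    exact integral_integral_swap hprod
  refine ⟨?_, ?_, ?_, ?_⟩
  · -- 1st inequality
    rw [int_add_const a b (fun x => f x ((c + d) / 2)) (hintx _ hn)]
    set IA := ∫ x in a..b, f x ((c + d) / 2) with hIA
    set IB := ∫ y in c..d, f ((a + b) / 2) y with hIB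
    have h1 : f ((a + b) / 2) ((c + d) / 2) ≤ (1 / (b - a)) * IA :=
      hh_left a b hab (fun x => f x ((c + d) / 2)) (hconvx _ hn) (hintx _ hn)
    have h2 : f ((a + b) / 2) ((c + d) / 2) ≤ (1 / (d - c)) * IB :=
      hh_left c d hcd (fun y => f ((a + b) / 2) y) (hconvy _ hm) (hinty _ hm)
    have e : (1:ℝ) / 2 * (1 / (b - a) * (IA + (b - a) * (1 / (d - c) * IB)))
        = 1 / 2 * (1 / (b - a) * IA) + 1 / 2 * (1 / (d - c) * IB) := by
      field_simp
    rw [e]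
    linarith
  · -- 2nd inequality
    rw [int_add_const a b (fun x => f x ((c + d) / 2)) (hintx _ hn)]
    set IA := ∫ x in a..b, f x ((c + d) / 2) with hIA
    set IB := ∫ y in c..d, f ((a + b) / 2) y with hIB
    set D := ∫ x in a..b, ∫ y in c..d, f x y with hD
    have stepA : IA ≤ (1 / (d - c)) * D := by
      have hmono := integral_mono_on hab.le (hintx _ hn) (hG1.const_mul (1 / (d - c)))
        (fun x hx => hh_left c d hcd (fun y => f x y) (hconvy x hx) (hinty x hx))
      rwa [intervalIntegral.integral_const_mul] at hmono
    have stepB : IB ≤ (1 / (b - a)) * D := by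
      have hmono := integral_mono_on hcd.le (hinty _ hm) (hG2.const_mul (1 / (b - a)))
        (fun y hy => hh_left a b hab (fun x => f x y) (hconvx y hy) (hintx y hy))
      rwa [intervalIntegral.integral_const_mul, ← hswap] at hmono
    have hA := mul_le_mul_of_nonneg_left stepA (by positivity : (0:ℝ) ≤ 1 / (b - a))
    have hB := mul_le_mul_of_nonneg_left stepB (by positivity : (0:ℝ) ≤ 1 / (d - c))
    have e : (1:ℝ) / 2 * (1 / (b - a) * (IA + (b - a) * (1 / (d - c) * IB)))
        = 1 / 2 * (1 / (b - a) * IA) + 1 / 2 * (1 / (d - c) * IB) := by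
      field_simp
    have e2 : (1:ℝ) / ((b - a) * (d - c)) * D
        = 1 / 2 * (1 / (b - a) * (1 / (d - c) * D)) + 1 / 2 * (1 / (d - c) * (1 / (b - a) * D)) := by
      field_simp
      ring
    rw [e, e2]
    linarith
  · -- 3rd inequality
    rw [int_add_const c d (fun y => f a y) (hinty _ haa),
      int_add_const a b (fun x => f x d) (hintx _ hdd),
      int_add_const a b (fun x => f x c) (hintx _ hcc)]
    set D := ∫ x in a..b, ∫ y in c..d, f x y with hD
    set IC := ∫ x in a..b, f x c with hIC
    set ID := ∫ x in a..b, f x d with hID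
    set IE := ∫ y in c..d, f a y with hIE
    set IF := ∫ y in c..d, f b y with hIF
    have step1 : D ≤ ((d - c) / 2) * (IC + ID) := by
      have hmono := integral_mono_on hab.le hG1
        ((((hintx _ hcc).add (hintx _ hdd)).const_mul ((d - c) / 2)))
        (fun x hx => by
          have h := hh_right' c d hcd (fun y => f x y) (hconvy x hx) (hinty x hx)
          show (∫ y in c..d, f x y) ≤ (d - c) / 2 * (f x c + f x d)
          linarith)
      rwa [intervalIntegral.integral_const_mul,
        intervalIntegral.integral_add (hintx _ hcc) (hintx _ hdd)] at hmono
    have step2 : D ≤ ((b - a) / 2) * (IE + IF) := by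
      have hmono := integral_mono_on hcd.le hG2
        ((((hinty _ haa).add (hinty _ hbb)).const_mul ((b - a) / 2)))
        (fun y hy => by
          have h := hh_right' a b hab (fun x => f x y) (hconvx y hy) (hintx y hy)
          show (∫ x in a..b, f x y) ≤ (b - a) / 2 * (f a y + f b y)
          linarith)
      rw [hswap]
      rwa [intervalIntegral.integral_const_mul,
        intervalIntegral.integral_add (hinty _ haa) (hinty _ hbb)] at hmono
    have h1 := mul_le_mul_of_nonneg_left step1
      (by positivity : (0:ℝ) ≤ (1 / (b - a)) * (1 / (d - c)))
    have h2 := mul_le_mul_of_nonneg_left step2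
      (by positivity : (0:ℝ) ≤ (1 / (b - a)) * (1 / (d - c)))
    have e : (1:ℝ) / 4 * (1 / (b - a) * (IC + (b - a) * (1 / (b - a) *
          (ID + (b - a) * (1 / (d - c) * (IE + (d - c) * (1 / (d - c) * IF)))))))
        = 1 / 4 * (1 / (b - a) * IC + 1 / (b - a) * ID
            + 1 / (d - c) * IE + 1 / (d - c) * IF) := by
      field_simp
      ring
    have e1 : (1:ℝ) / (b - a) * (1 / (d - c)) * ((d - c) / 2 * (IC + ID))
        = 1 / 2 * (1 / (b - a) * IC + 1 / (b - a) * ID) := by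
      field_simp
    have e2 : (1:ℝ) / (b - a) * (1 / (d - c)) * ((b - a) / 2 * (IE + IF))
        = 1 / 2 * (1 / (d - c) * IE + 1 / (d - c) * IF) := by
      field_simp
    have e3 : (1:ℝ) / ((b - a) * (d - c)) * D = 1 / (b - a) * (1 / (d - c)) * D := by
      field_simp
    rw [e, e3]
    rw [e1] at h1
    rw [e2] at h2
    linarith
  · -- 4th inequality
    rw [int_add_const c d (fun y => f a y) (hinty _ haa),
      int_add_const a b (fun x => f x d) (hintx _ hdd),
      int_add_const a b (fun x => f x c) (hintx _ hcc)]
    set IC := ∫ x in a..b, f x c with hIC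
    set ID := ∫ x in a..b, f x d with hID
    set IE := ∫ y in c..d, f a y with hIE
    set IF := ∫ y in c..d, f b y with hIF
    have e : (1:ℝ) / 4 * (1 / (b - a) * (IC + (b - a) * (1 / (b - a) *
          (ID + (b - a) * (1 / (d - c) * (IE + (d - c) * (1 / (d - c) * IF)))))))
        = 1 / 4 * (1 / (b - a) * IC + 1 / (b - a) * ID
            + 1 / (d - c) * IE + 1 / (d - c) * IF) := by
      field_simp
      ring
    have h1 : (1 / (b - a)) * IC ≤ (f a c + f b c) / 2 :=
      hh_right a b hab (fun x => f x c) (hconvx _ hcc) (hintx _ hcc)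
    have h2 : (1 / (b - a)) * ID ≤ (f a d + f b d) / 2 :=
      hh_right a b hab (fun x => f x d) (hconvx _ hdd) (hintx _ hdd)
    have h3 : (1 / (d - c)) * IE ≤ (f a c + f a d) / 2 :=
      hh_right c d hcd (fun y => f a y) (hconvy _ haa) (hinty _ haa)
    have h4 : (1 / (d - c)) * IF ≤ (f b c + f b d) / 2 :=
      hh_right c d hcd (fun y => f b y) (hconvy _ hbb) (hinty _ hbb)
    rw [e]
    linarith
end

section
/- Let f : ℝ² → ℝ be twice continuously differentiable on an open set containing Δ = [a,b] × [c,d] (a < b, c < d), and write f₁₂ for the second-order mixed partial derivative ∂²f/∂x∂y. Then (f(a,c)+f(a,d)+f(b,c)+f(b,d))/4 + (1/((b-a)(d-c)))∫_a^b ∫_c^d f(x,y) dy dx − (1/2)[(1/(b-a))∫_a^b (f(x,c)+f(x,d)) dx + (1/(d-c))∫_c^d (f(a,y)+f(b,y)) dy] = ((b-a)(d-c)/4) ∫_0^1 ∫_0^1 (1−2λ)(1−2μ) f₁₂(λa+(1−λ)b, μc+(1−μ)d) dλ dμ. -/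
/-!
Integration by parts against the midpoint kernel gives
`∫ t in u..v, (t - (u + v) / 2) * φ' t = (v - u) / 2 * (φ u + φ v) - ∫ t in u..v, φ t`.
Applied in `x` to `∂ₓ∂_y f` (after Fubini) and then in `y` to `∂_y f`, it turns
`∫∫ (x - (a + b) / 2) (y - (c + d) / 2) f₁₂` into the corner values of `f`, minus the edge
integrals, plus the double integral of `f`. The affine substitution `x = λa + (1 - λ)b`,
`y = μc + (1 - μ)d`, under which `1 - 2λ = 2 (x - (a + b) / 2) / (b - a)`, carries this identity
to the unit square.
-/

open MeasureTheory intervalIntegral Set Function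

theorem ContinuousOn.uncurry_flip {α β γ : Type*} [TopologicalSpace α] [TopologicalSpace β]
    [TopologicalSpace γ] {k : α → β → γ} {s : Set α} {t : Set β}
    (hk : ContinuousOn (uncurry k) (s ×ˢ t)) : ContinuousOn (uncurry (flip k)) (t ×ˢ s) := by
  rw [Function.uncurry_flip]
  exact hk.comp continuous_swap.continuousOn fun _ hp => ⟨hp.2, hp.1⟩

section RectangleIntegrals

variable {E : Type*} [NormedAddCommGroup E] {a b c d : ℝ}

theorem ContinuousOn.integrableOn_Ioc_prod_Ioc {F : ℝ × ℝ → E}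
    (hF : ContinuousOn F (Icc a b ×ˢ Icc c d)) : IntegrableOn F (Ioc a b ×ˢ Ioc c d) :=
  (hF.integrableOn_compact (isCompact_Icc.prod isCompact_Icc)).mono_set
    (prod_mono Ioc_subset_Icc_self Ioc_subset_Icc_self)

variable [NormedSpace ℝ E] {k : ℝ → ℝ → E}

theorem ContinuousOn.intervalIntegral_intervalIntegral_swap (hab : a ≤ b) (hcd : c ≤ d)
    (hk : ContinuousOn (uncurry k) (Icc a b ×ˢ Icc c d)) :
    ∫ x in a..b, ∫ y in c..d, k x y = ∫ y in c..d, ∫ x in a..b, k x y := by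
  refine MeasureTheory.intervalIntegral_intervalIntegral_swap ?_
  rw [uIoc_of_le hab, uIoc_of_le hcd]
  exact hk.integrableOn_Ioc_prod_Ioc

theorem ContinuousOn.intervalIntegrable_intervalIntegral_left (hab : a ≤ b) (hcd : c ≤ d)
    (hk : ContinuousOn (uncurry k) (Icc a b ×ˢ Icc c d)) :
    IntervalIntegrable (fun x => ∫ y in c..d, k x y) volume a b := by
  have hint : Integrable (uncurry k)
      ((volume.restrict (Ioc a b)).prod (volume.restrict (Ioc c d))) := by
    rw [Measure.prod_restrict, ← Measure.volume_eq_prod]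
    exact hk.integrableOn_Ioc_prod_Ioc
  rw [intervalIntegrable_iff_integrableOn_Ioc_of_le hab, IntegrableOn]
  simpa only [intervalIntegral.integral_of_le hcd, uncurry_apply_pair] using hint.integral_prod_left

theorem ContinuousOn.intervalIntegral_intervalIntegral_sub_const [CompleteSpace E] (hab : a ≤ b)
    (hcd : c ≤ d) (hk : ContinuousOn (uncurry k) (Icc a b ×ˢ Icc c d)) (C : E) :
    ∫ x in a..b, ∫ y in c..d, (k x y - C)
      = (∫ x in a..b, ∫ y in c..d, k x y) - (b - a) • (d - c) • C := by
  have hinner : ∀ x ∈ uIcc a b, ∫ y in c..d, (k x y - C) = (∫ y in c..d, k x y) - (d - c) • C :=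
    fun x hx => by
      rw [uIcc_of_le hab] at hx
      rw [intervalIntegral.integral_sub ((hk.uncurry_left x hx).intervalIntegrable_of_Icc hcd)
        intervalIntegrable_const, intervalIntegral.integral_const]
  rw [integral_congr hinner, intervalIntegral.integral_sub
    (hk.intervalIntegrable_intervalIntegral_left hab hcd) intervalIntegrable_const,
    intervalIntegral.integral_const]

end RectangleIntegrals

theorem integral_sub_midpoint_mul_deriv {φ φ' : ℝ → ℝ} {u v : ℝ}
    (hφ : ∀ t ∈ uIcc u v, HasDerivAt φ (φ' t) t) (hφ' : IntervalIntegrable φ' volume u v) :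
    ∫ t in u..v, (t - (u + v) / 2) * φ' t = (v - u) / 2 * (φ u + φ v) - ∫ t in u..v, φ t := by
  have hkernel : ∀ t ∈ uIcc u v, HasDerivAt (fun t => t - (u + v) / 2) 1 t :=
    fun t _ => (hasDerivAt_id t).sub_const _
  rw [integral_mul_deriv_eq_deriv_mul hkernel hφ intervalIntegrable_const hφ']
  simp only [one_mul]
  ring

theorem integral_integral_sub_midpoint_mul_deriv {a b c d : ℝ} {G G' : ℝ → ℝ → ℝ}
    (hab : a ≤ b) (hcd : c ≤ d)
    (hG : ∀ x ∈ Icc a b, ∀ y ∈ Icc c d, HasDerivAt (G x) (G' x y) y)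
    (hGc : ContinuousOn (uncurry G) (Icc a b ×ˢ Icc c d))
    (hG'c : ContinuousOn (uncurry G') (Icc a b ×ˢ Icc c d)) :
    ∫ x in a..b, ∫ y in c..d, (y - (c + d) / 2) * G' x y
      = (d - c) / 2 * (∫ x in a..b, (G x c + G x d)) - ∫ x in a..b, ∫ y in c..d, G x y := by
  have hinner : ∀ x ∈ uIcc a b, ∫ y in c..d, (y - (c + d) / 2) * G' x y
      = (d - c) / 2 * (G x c + G x d) - ∫ y in c..d, G x y := by
    intro x hx
    rw [uIcc_of_le hab] at hx
    exact integral_sub_midpoint_mul_deriv (fun y hy => hG x hx y (by rwa [uIcc_of_le hcd] at hy))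
      ((hG'c.uncurry_left x hx).intervalIntegrable_of_Icc hcd)
  have hedges : IntervalIntegrable (fun x => G x c + G x d) volume a b :=
    ((hGc.uncurry_right c (left_mem_Icc.mpr hcd)).add
      (hGc.uncurry_right d (right_mem_Icc.mpr hcd))).intervalIntegrable_of_Icc hab
  rw [integral_congr hinner, intervalIntegral.integral_sub (hedges.const_mul _)
    (hGc.intervalIntegrable_intervalIntegral_left hab hcd), intervalIntegral.integral_const_mul]

theorem integral_integral_sub_midpoint_mul_mixed_deriv {a b c d : ℝ} {g g₂ g₁₂ : ℝ → ℝ → ℝ}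
    (hab : a ≤ b) (hcd : c ≤ d)
    (hg₂ : ∀ x ∈ Icc a b, ∀ y ∈ Icc c d, HasDerivAt (g x) (g₂ x y) y)
    (hg₁₂ : ∀ x ∈ Icc a b, ∀ y ∈ Icc c d, HasDerivAt (fun x => g₂ x y) (g₁₂ x y) x)
    (hg : ContinuousOn (uncurry g) (Icc a b ×ˢ Icc c d))
    (hg₂c : ContinuousOn (uncurry g₂) (Icc a b ×ˢ Icc c d))
    (hg₁₂c : ContinuousOn (uncurry g₁₂) (Icc a b ×ˢ Icc c d)) :
    ∫ x in a..b, ∫ y in c..d, (x - (a + b) / 2) * (y - (c + d) / 2) * g₁₂ x y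
      = (b - a) * (d - c) / 4 * (g a c + g a d + g b c + g b d)
        - (b - a) / 2 * (∫ y in c..d, (g a y + g b y))
        - (d - c) / 2 * (∫ x in a..b, (g x c + g x d))
        + ∫ x in a..b, ∫ y in c..d, g x y := by
  have ha : a ∈ Icc a b := left_mem_Icc.mpr hab
  have hb : b ∈ Icc a b := right_mem_Icc.mpr hab
  have hweight : ContinuousOn (fun p : ℝ × ℝ => p.2 - (c + d) / 2) (Icc a b ×ˢ Icc c d) := by
    fun_prop
  have hweighted : ContinuousOn (uncurry fun x y => (y - (c + d) / 2) * g₂ x y)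
      (Icc a b ×ˢ Icc c d) := hweight.mul hg₂c
  have hkernel : ContinuousOn (uncurry fun x y => (x - (a + b) / 2) * ((y - (c + d) / 2) * g₁₂ x y))
      (Icc a b ×ˢ Icc c d) :=
    (continuous_fst.sub continuous_const).continuousOn.mul (hweight.mul hg₁₂c)
  have hedges : ∫ y in c..d, (y - (c + d) / 2) * (g₂ a y + g₂ b y)
      = (d - c) / 2 * (g a c + g b c + (g a d + g b d)) - ∫ y in c..d, (g a y + g b y) :=
    integral_sub_midpoint_mul_deriv
      (fun y hy => (hg₂ a ha y (by rwa [uIcc_of_le hcd] at hy)).add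
        (hg₂ b hb y (by rwa [uIcc_of_le hcd] at hy)))
      (((hg₂c.uncurry_left a ha).add (hg₂c.uncurry_left b hb)).intervalIntegrable_of_Icc hcd)
  calc ∫ x in a..b, ∫ y in c..d, (x - (a + b) / 2) * (y - (c + d) / 2) * g₁₂ x y
      = ∫ y in c..d, ∫ x in a..b, (x - (a + b) / 2) * ((y - (c + d) / 2) * g₁₂ x y) := by
        simp only [mul_assoc]
        exact hkernel.intervalIntegral_intervalIntegral_swap hab hcd
    _ = (b - a) / 2 * (∫ y in c..d, ((y - (c + d) / 2) * g₂ a y + (y - (c + d) / 2) * g₂ b y))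
          - ∫ y in c..d, ∫ x in a..b, (y - (c + d) / 2) * g₂ x y :=
        integral_integral_sub_midpoint_mul_deriv (G := fun y x => (y - (c + d) / 2) * g₂ x y)
          hcd hab (fun y hy x hx => (hg₁₂ x hx y hy).const_mul _) hweighted.uncurry_flip
          (hweight.mul hg₁₂c).uncurry_flip
    _ = (b - a) / 2 * ((d - c) / 2 * (g a c + g b c + (g a d + g b d))
            - ∫ y in c..d, (g a y + g b y))
          - ((d - c) / 2 * (∫ x in a..b, (g x c + g x d)) - ∫ x in a..b, ∫ y in c..d, g x y) := by
        rw [← hweighted.intervalIntegral_intervalIntegral_swap hab hcd,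
          integral_integral_sub_midpoint_mul_deriv hab hcd hg₂ hg hg₂c, ← hedges]
        simp only [mul_add]
    _ = _ := by ring

theorem integral_comp_affine_unitInterval {E : Type*} [NormedAddCommGroup E] [NormedSpace ℝ E]
    (h : ℝ → E) {a b : ℝ} (hab : a ≠ b) :
    ∫ t in (0 : ℝ)..1, h (t * a + (1 - t) * b) = (b - a)⁻¹ • ∫ x in a..b, h x := by
  have haff : ∀ t : ℝ, t * a + (1 - t) * b = (a - b) * t + b := fun t => by ring
  simp only [haff]
  rw [integral_comp_mul_add h (sub_ne_zero.mpr hab), mul_zero, zero_add, mul_one, sub_add_cancel,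
    integral_symm, ← neg_sub b a, inv_neg, neg_smul_neg]

theorem integral_integral_comp_affine_unitInterval {E : Type*} [NormedAddCommGroup E]
    [NormedSpace ℝ E] (h : ℝ → ℝ → E) {a b c d : ℝ} (hab : a ≠ b) (hcd : c ≠ d) :
    ∫ l in (0 : ℝ)..1, ∫ m in (0 : ℝ)..1, h (l * a + (1 - l) * b) (m * c + (1 - m) * d)
      = ((b - a) * (d - c))⁻¹ • ∫ x in a..b, ∫ y in c..d, h x y := by
  simp only [integral_comp_affine_unitInterval (h _) hcd, intervalIntegral.integral_smul]
  rw [integral_comp_affine_unitInterval (fun x => ∫ y in c..d, h x y) hab, smul_smul, mul_inv,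
    mul_comm]

section PartialDerivatives

variable {E : Type*} [NormedAddCommGroup E] [NormedSpace ℝ E]

noncomputable def partialFst (F : ℝ × ℝ → E) (p : ℝ × ℝ) : E := fderiv ℝ F p (1, 0)

noncomputable def partialSnd (F : ℝ × ℝ → E) (p : ℝ × ℝ) : E := fderiv ℝ F p (0, 1)

variable {F : ℝ × ℝ → E}

theorem DifferentiableAt.hasDerivAt_partialFst {p : ℝ × ℝ} (hF : DifferentiableAt ℝ F p) :
    HasDerivAt (fun x => F (x, p.2)) (partialFst F p) p.1 :=
  hF.hasFDerivAt.comp_hasDerivAt p.1 ((hasDerivAt_id _).prodMk (hasDerivAt_const _ _))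

theorem DifferentiableAt.hasDerivAt_partialSnd {p : ℝ × ℝ} (hF : DifferentiableAt ℝ F p) :
    HasDerivAt (fun y => F (p.1, y)) (partialSnd F p) p.2 :=
  hF.hasFDerivAt.comp_hasDerivAt p.2 ((hasDerivAt_const _ _).prodMk (hasDerivAt_id _))

variable {U : Set (ℝ × ℝ)} {n : WithTop ℕ∞}

theorem ContDiffOn.partialFst_of_isOpen (hU : IsOpen U) (hF : ContDiffOn ℝ (n + 1) F U) :
    ContDiffOn ℝ n (partialFst F) U :=
  (hF.fderiv_of_isOpen hU le_rfl).clm_apply contDiffOn_const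

theorem ContDiffOn.partialSnd_of_isOpen (hU : IsOpen U) (hF : ContDiffOn ℝ (n + 1) F U) :
    ContDiffOn ℝ n (partialSnd F) U :=
  (hF.fderiv_of_isOpen hU le_rfl).clm_apply contDiffOn_const

theorem ContDiffOn.deriv_deriv_eq_partialFst_partialSnd (hU : IsOpen U) (hF : ContDiffOn ℝ 2 F U)
    {x y : ℝ} (hp : (x, y) ∈ U) :
    deriv (fun x' => deriv (fun y' => F (x', y')) y) x = partialFst (partialSnd F) (x, y) := by
  have hline : (fun x' => deriv (fun y' => F (x', y')) y) =ᶠ[nhds x]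
      fun x' => partialSnd F (x', y) := by
    have hopen : IsOpen {x' : ℝ | (x', y) ∈ U} := hU.preimage (by fun_prop)
    filter_upwards [hopen.mem_nhds hp] with x' hx'
    exact ((hF.contDiffAt (hU.mem_nhds hx')).differentiableAt
      two_ne_zero).hasDerivAt_partialSnd.deriv
  rw [hline.deriv_eq]
  exact (((hF.partialSnd_of_isOpen (n := 1) hU).contDiffAt (hU.mem_nhds hp)).differentiableAt
    one_ne_zero).hasDerivAt_partialFst.deriv

end PartialDerivatives

theorem ContDiffOn.integral_integral_sub_midpoint_mul_deriv_deriv {a b c d : ℝ} {f : ℝ → ℝ → ℝ}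
    {U : Set (ℝ × ℝ)} (hab : a ≤ b) (hcd : c ≤ d) (hU : IsOpen U)
    (hsub : Icc a b ×ˢ Icc c d ⊆ U) (hf : ContDiffOn ℝ 2 (fun p : ℝ × ℝ => f p.1 p.2) U) :
    ∫ x in a..b, ∫ y in c..d, (x - (a + b) / 2) * (y - (c + d) / 2) *
        deriv (fun x' => deriv (fun y' => f x' y') y) x
      = (b - a) * (d - c) / 4 * (f a c + f a d + f b c + f b d)
        - (b - a) / 2 * (∫ y in c..d, (f a y + f b y))
        - (d - c) / 2 * (∫ x in a..b, (f x c + f x d))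
        + ∫ x in a..b, ∫ y in c..d, f x y := by
  set F : ℝ × ℝ → ℝ := fun p => f p.1 p.2
  have hmem : ∀ x ∈ Icc a b, ∀ y ∈ Icc c d, (x, y) ∈ U := fun x hx y hy => hsub ⟨hx, hy⟩
  have hF₂ : ContDiffOn ℝ 1 (partialSnd F) U := hf.partialSnd_of_isOpen hU
  have hmixed : ∀ p ∈ U, deriv (fun x' => deriv (fun y' => f x' y') p.2) p.1
      = partialFst (partialSnd F) p := fun p hp => hf.deriv_deriv_eq_partialFst_partialSnd hU hp
  refine integral_integral_sub_midpoint_mul_mixed_deriv (g₂ := fun x y => partialSnd F (x, y))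
    hab hcd (fun x hx y hy => ?_) (fun x hx y hy => ?_) (hf.continuousOn.mono hsub)
    (hF₂.continuousOn.mono hsub) ?_
  · exact ((hf.contDiffAt (hU.mem_nhds (hmem x hx y hy))).differentiableAt
      two_ne_zero).hasDerivAt_partialSnd
  · rw [hmixed (x, y) (hmem x hx y hy)]
    exact ((hF₂.contDiffAt (hU.mem_nhds (hmem x hx y hy))).differentiableAt
      one_ne_zero).hasDerivAt_partialFst
  · exact ((hF₂.partialFst_of_isOpen (n := 0) hU).continuousOn.mono hsub).congr
      fun p hp => hmixed p (hsub hp)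

/-- Sarikaya et al.'s identity (Lemma 1): representation of the Hadamard-type
difference via the double integral of the mixed second partial derivative. -/
theorem sarikaya_identity
    (a b c d : ℝ) (hab : a < b) (hcd : c < d)
    (f f₁₂ : ℝ → ℝ → ℝ) (U : Set (ℝ × ℝ)) (hU : IsOpen U)
    (hsub : Set.Icc a b ×ˢ Set.Icc c d ⊆ U)
    (hf : ContDiffOn ℝ 2 (fun p : ℝ × ℝ => f p.1 p.2) U)
    (hf₁₂ : ∀ x y, f₁₂ x y = deriv (fun xx => deriv (fun yy => f xx yy) y) x) :
    (f a c + f a d + f b c + f b d) / 4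
      + (1 / ((b - a) * (d - c))) * ∫ x in a..b, ∫ y in c..d, f x y
      - (1 / 2) * ((1 / (b - a)) * (∫ x in a..b, (f x c + f x d))
        + (1 / (d - c)) * (∫ y in c..d, (f a y + f b y)))
    = ((b - a) * (d - c) / 4) *
        ∫ l in (0:ℝ)..1, ∫ m in (0:ℝ)..1,
          (1 - 2 * l) * (1 - 2 * m) *
            f₁₂ (l * a + (1 - l) * b) (m * c + (1 - m) * d) := by
  have hba : b - a ≠ 0 := sub_ne_zero.mpr hab.ne'
  have hdc : d - c ≠ 0 := sub_ne_zero.mpr hcd.ne'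
  have hkernel : ∀ l m : ℝ,
      (1 - 2 * l) * (1 - 2 * m) * f₁₂ (l * a + (1 - l) * b) (m * c + (1 - m) * d)
        = 4 / ((b - a) * (d - c)) * ((l * a + (1 - l) * b - (a + b) / 2) *
          (m * c + (1 - m) * d - (c + d) / 2) *
            f₁₂ (l * a + (1 - l) * b) (m * c + (1 - m) * d)) := by
    intro l m
    field_simp
    ring
  simp only [hkernel]
  rw [integral_integral_comp_affine_unitInterval (fun x y => 4 / ((b - a) * (d - c)) *
    ((x - (a + b) / 2) * (y - (c + d) / 2) * f₁₂ x y)) hab.ne hcd.ne]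
  simp only [intervalIntegral.integral_const_mul, smul_eq_mul, hf₁₂]
  -- the binder of `∫ x in a..b` on the left extends to the end of the left-hand side
  rw [(hf.continuousOn.mono hsub).intervalIntegral_intervalIntegral_sub_const hab.le hcd.le,
    hf.integral_integral_sub_midpoint_mul_deriv_deriv hab.le hcd.le hU hsub, smul_eq_mul,
    smul_eq_mul]
  generalize (∫ x in a..b, ∫ y in c..d, f x y) = I, (∫ x in a..b, (f x c + f x d)) = Ix,
    (∫ y in c..d, (f a y + f b y)) = Iy
  field_simp
  ring
end

section
/- Let f : ℝ² → ℝ be twice continuously differentiable on an open set containing Δ = [a,b] × [c,d] (a < b, c < d), with second-order mixed partial derivative f₁₂ = ∂²f/∂x∂y, and suppose |f₁₂| is convex on Δ (as a function of the pair of variables). Let A = (1/2)[(1/(b-a))∫_a^b (f(x,c)+f(x,d)) dx + (1/(d-c))∫_c^d (f(a,y)+f(b,y)) dy]. Then |(f(a,c)+f(a,d)+f(b,c)+f(b,d))/4 + (1/((b-a)(d-c)))∫_a^b ∫_c^d f(x,y) dy dx − A| ≤ ((b-a)(d-c)/16) · (|f₁₂(a,c)| + |f₁₂(a,d)| + |f₁₂(b,c)|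 + |f₁₂(b,d)|)/4. -/
open MeasureTheory intervalIntegral
open Set Function Topology

/-!
Integrating by parts once in each variable against the kernel `(x - (a + b)/2) (y - (c + d)/2)`
turns the quantity inside the absolute value into
`1/((b - a)(d - c)) ∫∫ (x - (a + b)/2) (y - (c + d)/2) f₁₂(x, y)`.
Convexity of `|f₁₂|` along horizontal and then vertical segments bounds `|f₁₂|` by the bilinear
interpolation of its four corner values, and each linear weight integrates against the kernel to
`∫ₐᵇ |x - (a + b)/2| (b - x) dx = (b - a)³/8`.
-/

theorem integral_abs_sub_midpoint_mul_sub_left {a b : ℝ} (hab : a ≤ b) :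
    ∫ x in a..b, |x - (a + b) / 2| * (b - x) = (b - a) ^ 3 / 8 := by
  set m := (a + b) / 2 with hm
  have ham : a ≤ m := by linarith
  have hmb : m ≤ b := by linarith
  set Φ : ℝ → ℝ := fun x => m * b * x - (m + b) * x ^ 2 / 2 + x ^ 3 / 3
  have hΦ (p q : ℝ) : ∫ x in p..q, (m - x) * (b - x) = Φ q - Φ p := by
    refine integral_eq_sub_of_hasDerivAt (fun x _ => ?_)
      (Continuous.intervalIntegrable (by fun_prop) _ _)
    convert (((hasDerivAt_id' x).const_mul (m * b)).sub
      (((hasDerivAt_pow 2 x).const_mul (m + b)).div_const 2)).add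
      ((hasDerivAt_pow 3 x).div_const 3) using 1
    · ext y; simp only [Φ, Pi.add_apply, Pi.sub_apply]
    · push_cast; ring
  have hleft : ∫ x in a..m, |x - m| * (b - x) = ∫ x in a..m, (m - x) * (b - x) :=
    integral_congr fun x hx => by
      rw [uIcc_of_le ham] at hx
      simp only [abs_of_nonpos (sub_nonpos.2 hx.2), neg_sub]
  have hright : ∫ x in m..b, |x - m| * (b - x) = -∫ x in m..b, (m - x) * (b - x) := by
    rw [← intervalIntegral.integral_neg]
    refine integral_congr fun x hx => ?_
    rw [uIcc_of_le hmb] at hx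
    simp only [abs_of_nonneg (sub_nonneg.2 hx.1)]
    ring
  have hint (p q : ℝ) : IntervalIntegrable (fun x => |x - m| * (b - x)) volume p q :=
    Continuous.intervalIntegrable (by fun_prop) _ _
  rw [← integral_add_adjacent_intervals (hint a m) (hint m b), hleft, hright, hΦ, hΦ]
  simp only [Φ, hm]
  ring

theorem integral_abs_sub_midpoint_mul_sub_right {a b : ℝ} (hab : a ≤ b) :
    ∫ x in a..b, |x - (a + b) / 2| * (x - a) = (b - a) ^ 3 / 8 := by
  have h := integral_comp_sub_left (fun x => |x - (a + b) / 2| * (b - x)) (a + b) (a := a) (b := b)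
  simp only [add_sub_cancel_left, add_sub_cancel_right] at h
  rw [← integral_abs_sub_midpoint_mul_sub_left hab, ← h]
  refine integral_congr fun x _ => ?_
  rw [← abs_neg]
  ring_nf

theorem integral_abs_sub_midpoint_mul_secant {a b : ℝ} (hab : a ≤ b) (P Q : ℝ) :
    ∫ x in a..b, |x - (a + b) / 2| * ((b - x) * P + (x - a) * Q) = (b - a) ^ 3 / 8 * (P + Q) := by
  simp only [mul_add, ← mul_assoc]
  rw [intervalIntegral.integral_add, intervalIntegral.integral_mul_const,
    intervalIntegral.integral_mul_const,
    integral_abs_sub_midpoint_mul_sub_left hab, integral_abs_sub_midpoint_mul_sub_right hab]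
  all_goals exact Continuous.intervalIntegrable (by fun_prop) _ _

theorem ConvexOn.le_secant {g : ℝ → ℝ} {a b x : ℝ} (hg : ConvexOn ℝ (Icc a b) g) (hab : a < b)
    (hx : x ∈ Icc a b) : g x ≤ ((b - x) * g a + (x - a) * g b) / (b - a) := by
  have hba : 0 < b - a := sub_pos.2 hab
  have h : g ((b - x) / (b - a) * a + (x - a) / (b - a) * b)
      ≤ (b - x) / (b - a) * g a + (x - a) / (b - a) * g b :=
    hg.2 (left_mem_Icc.2 hab.le) (right_mem_Icc.2 hab.le)
      (div_nonneg (sub_nonneg.2 hx.2) hba.le) (div_nonneg (sub_nonneg.2 hx.1) hba.le)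
      (by field_simp; ring)
  convert h using 2
  · field_simp; ring
  · field_simp

theorem abs_integral_sub_midpoint_mul_le {φ : ℝ → ℝ} {a b P Q : ℝ} (hab : a < b)
    (hφ : IntervalIntegrable φ volume a b)
    (hbound : ∀ x ∈ Icc a b, |φ x| ≤ ((b - x) * P + (x - a) * Q) / (b - a)) :
    |∫ x in a..b, (x - (a + b) / 2) * φ x| ≤ (b - a) ^ 2 / 8 * (P + Q) := by
  calc |∫ x in a..b, (x - (a + b) / 2) * φ x|
      ≤ ∫ x in a..b, |(x - (a + b) / 2) * φ x| := abs_integral_le_integral_abs hab.le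
    _ ≤ ∫ x in a..b, |x - (a + b) / 2| * ((b - x) * P + (x - a) * Q) / (b - a) := by
        refine integral_mono_on hab.le ?_ (Continuous.intervalIntegrable (by fun_prop) _ _)
          fun x hx => ?_
        · exact (hφ.continuousOn_mul (by fun_prop)).abs
        · rw [abs_mul, mul_div_assoc]
          exact mul_le_mul_of_nonneg_left (hbound x hx) (abs_nonneg _)
    _ = (b - a) ^ 2 / 8 * (P + Q) := by
        rw [intervalIntegral.integral_div, integral_abs_sub_midpoint_mul_secant hab.le]
        field_simp [(sub_pos.2 hab).ne']

section ConvexSlices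

variable {𝕜 E F β : Type*} [Semiring 𝕜] [PartialOrder 𝕜] [AddCommMonoid E] [Module 𝕜 E]
  [AddCommMonoid F] [Module 𝕜 F] [AddCommMonoid β] [PartialOrder β] [SMul 𝕜 β]
  {s : Set E} {t : Set F} {f : E × F → β}

theorem ConvexOn.slice_fixed_snd (hf : ConvexOn 𝕜 (s ×ˢ t) f) {y : F} (hy : y ∈ t) :
    ConvexOn 𝕜 s fun x => f (x, y) := by
  refine ⟨?_, fun x hx x' hx' μ ν hμ hν hμν => ?_⟩
  · simpa [fst_image_prod s ⟨y, hy⟩] using hf.1.linear_image (LinearMap.fst 𝕜 E F)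
  · simpa [← add_smul, hμν] using hf.2 (mk_mem_prod hx hy) (mk_mem_prod hx' hy) hμ hν hμν

theorem ConvexOn.slice_fixed_fst (hf : ConvexOn 𝕜 (s ×ˢ t) f) {x : E} (hx : x ∈ s) :
    ConvexOn 𝕜 t fun y => f (x, y) := by
  refine ⟨?_, fun y hy y' hy' μ ν hμ hν hμν => ?_⟩
  · simpa [snd_image_prod ⟨x, hx⟩ t] using hf.1.linear_image (LinearMap.snd 𝕜 E F)
  · simpa [← add_smul, hμν] using hf.2 (mk_mem_prod hx hy) (mk_mem_prod hx hy') hμ hν hμν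

end ConvexSlices

section PartialDerivatives

variable {E : Type*} [NormedAddCommGroup E] [NormedSpace ℝ E] {F : ℝ × ℝ → E} {p : ℝ × ℝ}
  {U : Set (ℝ × ℝ)} {m n : WithTop ℕ∞}

theorem DifferentiableAt.hasDerivAt_slice_fst (h : DifferentiableAt ℝ F p) :
    HasDerivAt (fun x => F (x, p.2)) (fderiv ℝ F p (1, 0)) p.1 :=
  h.hasFDerivAt.comp_hasDerivAt p.1 ((hasDerivAt_id _).prodMk (hasDerivAt_const _ _))

theorem DifferentiableAt.hasDerivAt_slice_snd (h : DifferentiableAt ℝ F p) :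
    HasDerivAt (fun y => F (p.1, y)) (fderiv ℝ F p (0, 1)) p.2 :=
  h.hasFDerivAt.comp_hasDerivAt p.2 ((hasDerivAt_const _ _).prodMk (hasDerivAt_id _))

theorem ContDiffOn.deriv_slice_fst (hF : ContDiffOn ℝ n F U) (hU : IsOpen U) (hmn : m + 1 ≤ n) :
    ContDiffOn ℝ m (fun p => deriv (fun x => F (x, p.2)) p.1) U := by
  refine ((ContinuousLinearMap.apply ℝ E ((1 : ℝ), (0 : ℝ))).contDiff.comp_contDiffOn
    (hF.fderiv_of_isOpen hU hmn)).congr fun p hp => ?_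
  exact (((hF.of_le (le_add_self.trans hmn)).differentiableOn_one).differentiableAt
    (hU.mem_nhds hp)).hasDerivAt_slice_fst.deriv

theorem ContDiffOn.deriv_slice_snd (hF : ContDiffOn ℝ n F U) (hU : IsOpen U) (hmn : m + 1 ≤ n) :
    ContDiffOn ℝ m (fun p => deriv (fun y => F (p.1, y)) p.2) U := by
  refine ((ContinuousLinearMap.apply ℝ E ((0 : ℝ), (1 : ℝ))).contDiff.comp_contDiffOn
    (hF.fderiv_of_isOpen hU hmn)).congr fun p hp => ?_
  exact (((hF.of_le (le_add_self.trans hmn)).differentiableOn_one).differentiableAt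
    (hU.mem_nhds hp)).hasDerivAt_slice_snd.deriv

end PartialDerivatives

section Fubini

variable {E : Type*} [NormedAddCommGroup E] {W : ℝ → ℝ → E} {a b c d : ℝ}

theorem ContinuousOn.integrable_prod_restrict_Ioc
    (hW : ContinuousOn (uncurry W) (Icc a b ×ˢ Icc c d)) :
    Integrable (uncurry W) ((volume.restrict (Ioc a b)).prod (volume.restrict (Ioc c d))) := by
  rw [Measure.prod_restrict]
  exact (hW.integrableOn_compact (isCompact_Icc.prod isCompact_Icc)).mono_set
    (prod_mono Ioc_subset_Icc_self Ioc_subset_Icc_self)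

variable [NormedSpace ℝ E]

theorem ContinuousOn.intervalIntegral_swap (hab : a ≤ b) (hcd : c ≤ d)
    (hW : ContinuousOn (uncurry W) (Icc a b ×ˢ Icc c d)) :
    ∫ x in a..b, ∫ y in c..d, W x y = ∫ y in c..d, ∫ x in a..b, W x y := by
  simp only [intervalIntegral.integral_of_le hab, intervalIntegral.integral_of_le hcd]
  exact integral_integral_swap hW.integrable_prod_restrict_Ioc

theorem ContinuousOn.intervalIntegrable_integral_snd (hab : a ≤ b) (hcd : c ≤ d)
    (hW : ContinuousOn (uncurry W) (Icc a b ×ˢ Icc c d)) :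
    IntervalIntegrable (fun x => ∫ y in c..d, W x y) volume a b := by
  rw [intervalIntegrable_iff_integrableOn_Ioc_of_le hab]
  simp only [intervalIntegral.integral_of_le hcd]
  exact hW.integrable_prod_restrict_Ioc.integral_prod_left

theorem ContinuousOn.intervalIntegrable_integral_fst (hab : a ≤ b) (hcd : c ≤ d)
    (hW : ContinuousOn (uncurry W) (Icc a b ×ˢ Icc c d)) :
    IntervalIntegrable (fun y => ∫ x in a..b, W x y) volume c d := by
  rw [intervalIntegrable_iff_integrableOn_Ioc_of_le hcd]
  simp only [intervalIntegral.integral_of_le hab]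
  exact hW.integrable_prod_restrict_Ioc.integral_prod_right

end Fubini

theorem integral_sub_mul_deriv_eq {u u' : ℝ → ℝ} {a b : ℝ} (m : ℝ)
    (hu : ∀ x ∈ uIcc a b, HasDerivAt u (u' x) x) (hu' : IntervalIntegrable u' volume a b) :
    ∫ x in a..b, (x - m) * u' x = (b - m) * u b - (a - m) * u a - ∫ x in a..b, u x := by
  simpa using integral_mul_deriv_eq_deriv_mul (fun x _ => (hasDerivAt_id x).sub_const m) hu
    intervalIntegrable_const hu'

section Rectangle

variable {a b c d : ℝ} {f g h : ℝ → ℝ → ℝ}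

theorem integral_sub_mul_integral_sub_mul_eq (m₁ m₂ : ℝ) (hab : a ≤ b) (hcd : c ≤ d)
    (hf : ContinuousOn (uncurry f) (Icc a b ×ˢ Icc c d))
    (hg : ContinuousOn (uncurry g) (Icc a b ×ˢ Icc c d))
    (hh : ContinuousOn (uncurry h) (Icc a b ×ˢ Icc c d))
    (hfg : ∀ x ∈ Icc a b, ∀ y ∈ Icc c d, HasDerivAt (f x) (g x y) y)
    (hgh : ∀ x ∈ Icc a b, ∀ y ∈ Icc c d, HasDerivAt (fun x => g x y) (h x y) x) :
    ∫ y in c..d, (y - m₂) * ∫ x in a..b, (x - m₁) * h x y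
      = (b - m₁) * ((d - m₂) * f b d - (c - m₂) * f b c - ∫ y in c..d, f b y)
        - (a - m₁) * ((d - m₂) * f a d - (c - m₂) * f a c - ∫ y in c..d, f a y)
        - ((d - m₂) * ∫ x in a..b, f x d) + (c - m₂) * (∫ x in a..b, f x c)
        + ∫ x in a..b, ∫ y in c..d, f x y := by
  have ha : a ∈ Icc a b := left_mem_Icc.2 hab
  have hb : b ∈ Icc a b := right_mem_Icc.2 hab
  have hx_parts : ∀ y ∈ Icc c d, ∫ x in a..b, (x - m₁) * h x y
      = (b - m₁) * g b y - (a - m₁) * g a y - ∫ x in a..b, g x y := fun y hy =>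
    integral_sub_mul_deriv_eq m₁ (fun x hx => hgh x (uIcc_of_le hab ▸ hx) y hy)
      ((hh.uncurry_right y hy).intervalIntegrable_of_Icc hab)
  have hy_parts : ∀ x ∈ Icc a b, ∫ y in c..d, (y - m₂) * g x y
      = (d - m₂) * f x d - (c - m₂) * f x c - ∫ y in c..d, f x y := fun x hx =>
    integral_sub_mul_deriv_eq m₂ (fun y hy => hfg x hx y (uIcc_of_le hcd ▸ hy))
      ((hg.uncurry_left x hx).intervalIntegrable_of_Icc hcd)
  have hW : ContinuousOn (uncurry fun x y => (y - m₂) * g x y) (Icc a b ×ˢ Icc c d) :=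
    (continuous_snd.sub continuous_const).continuousOn.mul hg
  have hg_slice (x : ℝ) (hx : x ∈ Icc a b) :
      IntervalIntegrable (fun y => (y - m₂) * g x y) volume c d :=
    (hW.uncurry_left x hx).intervalIntegrable_of_Icc hcd
  have hf_slice (y : ℝ) (hy : y ∈ Icc c d) : IntervalIntegrable (fun x => f x y) volume a b :=
    (hf.uncurry_right y hy).intervalIntegrable_of_Icc hab
  calc ∫ y in c..d, (y - m₂) * ∫ x in a..b, (x - m₁) * h x y
      = ∫ y in c..d, ((b - m₁) * ((y - m₂) * g b y) - (a - m₁) * ((y - m₂) * g a y)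
          - ∫ x in a..b, (y - m₂) * g x y) :=
        integral_congr fun y hy => by
          rw [hx_parts y (uIcc_of_le hcd ▸ hy), intervalIntegral.integral_const_mul]
          ring
    _ = (b - m₁) * (∫ y in c..d, (y - m₂) * g b y) - (a - m₁) * (∫ y in c..d, (y - m₂) * g a y)
          - ∫ x in a..b, ∫ y in c..d, (y - m₂) * g x y := by
        rw [intervalIntegral.integral_sub, intervalIntegral.integral_sub,
          intervalIntegral.integral_const_mul, intervalIntegral.integral_const_mul,
          hW.intervalIntegral_swap hab hcd]
        · exact (hg_slice b hb).const_mul _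
        · exact (hg_slice a ha).const_mul _
        · exact ((hg_slice b hb).const_mul _).sub ((hg_slice a ha).const_mul _)
        · exact hW.intervalIntegrable_integral_fst hab hcd
    _ = (b - m₁) * ((d - m₂) * f b d - (c - m₂) * f b c - ∫ y in c..d, f b y)
          - (a - m₁) * ((d - m₂) * f a d - (c - m₂) * f a c - ∫ y in c..d, f a y)
          - ∫ x in a..b, ((d - m₂) * f x d - (c - m₂) * f x c - ∫ y in c..d, f x y) := by
        rw [hy_parts b hb, hy_parts a ha,
          integral_congr fun x hx => hy_parts x (uIcc_of_le hab ▸ hx)]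
    _ = _ := by
        have hd := (hf_slice d (right_mem_Icc.2 hcd)).const_mul (d - m₂)
        have hc := (hf_slice c (left_mem_Icc.2 hcd)).const_mul (c - m₂)
        rw [intervalIntegral.integral_sub (hd.sub hc) (hf.intervalIntegrable_integral_snd hab hcd),
          intervalIntegral.integral_sub hd hc, intervalIntegral.integral_const_mul,
          intervalIntegral.integral_const_mul]
        ring

theorem corner_add_mean_sub_edge_mean_eq_integral (hab : a < b) (hcd : c < d)
    (hf : ContinuousOn (uncurry f) (Icc a b ×ˢ Icc c d))
    (hg : ContinuousOn (uncurry g) (Icc a b ×ˢ Icc c d))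
    (hh : ContinuousOn (uncurry h) (Icc a b ×ˢ Icc c d))
    (hfg : ∀ x ∈ Icc a b, ∀ y ∈ Icc c d, HasDerivAt (f x) (g x y) y)
    (hgh : ∀ x ∈ Icc a b, ∀ y ∈ Icc c d, HasDerivAt (fun x => g x y) (h x y) x) :
    (f a c + f a d + f b c + f b d) / 4
        + (1 / ((b - a) * (d - c))) * ∫ x in a..b, ∫ y in c..d, f x y
        - (1 / 2) * ((1 / (b - a)) * (∫ x in a..b, (f x c + f x d))
          + (1 / (d - c)) * (∫ y in c..d, (f a y + f b y)))
      = (1 / ((b - a) * (d - c))) *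
          ∫ y in c..d, (y - (c + d) / 2) * ∫ x in a..b, (x - (a + b) / 2) * h x y := by
  have hf_slice (y : ℝ) (hy : y ∈ Icc c d) : IntervalIntegrable (fun x => f x y) volume a b :=
    (hf.uncurry_right y hy).intervalIntegrable_of_Icc hab.le
  have hf_slice' (x : ℝ) (hx : x ∈ Icc a b) : IntervalIntegrable (f x) volume c d :=
    (hf.uncurry_left x hx).intervalIntegrable_of_Icc hcd.le
  set A := (1 / 2) * ((1 / (b - a)) * (∫ x in a..b, (f x c + f x d))
    + (1 / (d - c)) * (∫ y in c..d, (f a y + f b y))) with hA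
  -- in the statement, the binder `∫ y in c..d,` extends over `f x y - A`
  have hmean : ∫ x in a..b, ∫ y in c..d, (f x y - A)
      = (∫ x in a..b, ∫ y in c..d, f x y) - (b - a) * ((d - c) * A) := by
    have hinner : ∀ x ∈ uIcc a b, ∫ y in c..d, (f x y - A) = (∫ y in c..d, f x y) - (d - c) * A :=
      fun x hx => by
        rw [intervalIntegral.integral_sub (hf_slice' x (uIcc_of_le hab.le ▸ hx))
          intervalIntegrable_const, intervalIntegral.integral_const, smul_eq_mul]
    rw [integral_congr hinner, intervalIntegral.integral_sub
      (hf.intervalIntegrable_integral_snd hab.le hcd.le) intervalIntegrable_const,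
      intervalIntegral.integral_const, smul_eq_mul]
  rw [hmean, integral_sub_mul_integral_sub_mul_eq _ _ hab.le hcd.le hf hg hh hfg hgh, hA,
    intervalIntegral.integral_add (hf_slice c (left_mem_Icc.2 hcd.le))
      (hf_slice d (right_mem_Icc.2 hcd.le)),
    intervalIntegral.integral_add (hf_slice' a (left_mem_Icc.2 hab.le))
      (hf_slice' b (right_mem_Icc.2 hab.le))]
  have hba : b - a ≠ 0 := (sub_pos.2 hab).ne'
  have hdc : d - c ≠ 0 := (sub_pos.2 hcd).ne'
  field_simp
  ring

theorem abs_integral_sub_mul_integral_sub_mul_le (hab : a < b) (hcd : c < d)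
    (hh : ContinuousOn (uncurry h) (Icc a b ×ˢ Icc c d))
    (hconv : ConvexOn ℝ (Icc a b ×ˢ Icc c d) fun p => |h p.1 p.2|) :
    |∫ y in c..d, (y - (c + d) / 2) * ∫ x in a..b, (x - (a + b) / 2) * h x y|
      ≤ (b - a) ^ 2 * (d - c) ^ 2 / 64 * (|h a c| + |h a d| + |h b c| + |h b d|) := by
  have hinner (y : ℝ) (hy : y ∈ Icc c d) :
      |∫ x in a..b, (x - (a + b) / 2) * h x y| ≤ (b - a) ^ 2 / 8 * (|h a y| + |h b y|) :=
    abs_integral_sub_midpoint_mul_le hab ((hh.uncurry_right y hy).intervalIntegrable_of_Icc hab.le)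
      fun x hx => (hconv.slice_fixed_snd hy).le_secant hab hx
  have hsecant (x : ℝ) (hx : x ∈ Icc a b) (y : ℝ) (hy : y ∈ Icc c d) :
      |h x y| ≤ ((d - y) * |h x c| + (y - c) * |h x d|) / (d - c) :=
    (hconv.slice_fixed_fst hx).le_secant hcd hy
  have hW : ContinuousOn (uncurry fun y x => (x - (a + b) / 2) * h x y) (Icc c d ×ˢ Icc a b) :=
    (continuous_snd.sub continuous_const).continuousOn.mul
      (hh.comp continuous_swap.continuousOn fun p hp => ⟨hp.2, hp.1⟩)
  refine (abs_integral_sub_midpoint_mul_le (P := (b - a) ^ 2 / 8 * (|h a c| + |h b c|))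
    (Q := (b - a) ^ 2 / 8 * (|h a d| + |h b d|)) hcd
    (hW.intervalIntegrable_integral_snd hcd.le hab.le) fun y hy => (hinner y hy).trans ?_).trans_eq
    (by ring)
  calc (b - a) ^ 2 / 8 * (|h a y| + |h b y|)
      ≤ (b - a) ^ 2 / 8 * (((d - y) * |h a c| + (y - c) * |h a d|) / (d - c)
          + ((d - y) * |h b c| + (y - c) * |h b d|) / (d - c)) := by
        gcongr
        · exact hsecant a (left_mem_Icc.2 hab.le) y hy
        · exact hsecant b (right_mem_Icc.2 hab.le) y hy
    _ = _ := by ring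

end Rectangle

/-- Sarikaya et al.'s Hadamard-type inequality (Theorem 2) for functions whose
mixed second partial derivative has convex absolute value on the rectangle. -/
theorem sarikaya_theorem_two
    (a b c d : ℝ) (hab : a < b) (hcd : c < d)
    (f f₁₂ : ℝ → ℝ → ℝ) (U : Set (ℝ × ℝ)) (hU : IsOpen U)
    (hsub : Set.Icc a b ×ˢ Set.Icc c d ⊆ U)
    (hf : ContDiffOn ℝ 2 (fun p : ℝ × ℝ => f p.1 p.2) U)
    (hf₁₂ : ∀ x y, f₁₂ x y = deriv (fun xx => deriv (fun yy => f xx yy) y) x)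
    (hconv : ConvexOn ℝ (Set.Icc a b ×ˢ Set.Icc c d)
      (fun p : ℝ × ℝ => |f₁₂ p.1 p.2|)) :
    |(f a c + f a d + f b c + f b d) / 4
        + (1 / ((b - a) * (d - c))) * ∫ x in a..b, ∫ y in c..d, f x y
        - (1 / 2) * ((1 / (b - a)) * (∫ x in a..b, (f x c + f x d))
          + (1 / (d - c)) * (∫ y in c..d, (f a y + f b y)))|
      ≤ ((b - a) * (d - c) / 16) *
          ((|f₁₂ a c| + |f₁₂ a d| + |f₁₂ b c| + |f₁₂ b d|) / 4) := by
  set g : ℝ → ℝ → ℝ := fun x y => deriv (fun y => f x y) y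
  have hg : ContDiffOn ℝ 1 (uncurry g) U := hf.deriv_slice_snd hU (by norm_num)
  have hh : ContinuousOn (uncurry f₁₂) U :=
    (hg.deriv_slice_fst (m := 0) hU (by norm_num)).continuousOn.congr fun p _ => hf₁₂ p.1 p.2
  have hnhds {x y : ℝ} (hx : x ∈ Icc a b) (hy : y ∈ Icc c d) : U ∈ 𝓝 (x, y) :=
    hU.mem_nhds (hsub ⟨hx, hy⟩)
  have hfg (x : ℝ) (hx : x ∈ Icc a b) (y : ℝ) (hy : y ∈ Icc c d) : HasDerivAt (f x) (g x y) y :=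
    ((hf.differentiableOn (by norm_num)).differentiableAt
      (hnhds hx hy)).hasDerivAt_slice_snd.differentiableAt.hasDerivAt
  have hgh (x : ℝ) (hx : x ∈ Icc a b) (y : ℝ) (hy : y ∈ Icc c d) :
      HasDerivAt (fun x => g x y) (f₁₂ x y) x := by
    rw [hf₁₂]
    exact (hg.differentiableOn_one.differentiableAt
      (hnhds hx hy)).hasDerivAt_slice_fst.differentiableAt.hasDerivAt
  have hba : 0 < b - a := sub_pos.2 hab
  have hdc : 0 < d - c := sub_pos.2 hcd
  rw [corner_add_mean_sub_edge_mean_eq_integral hab hcd (hf.continuousOn.mono hsub)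
    (hg.continuousOn.mono hsub) (hh.mono hsub) hfg hgh, abs_mul, abs_of_pos (by positivity)]
  calc _ ≤ 1 / ((b - a) * (d - c)) *
        ((b - a) ^ 2 * (d - c) ^ 2 / 64 * (|f₁₂ a c| + |f₁₂ a d| + |f₁₂ b c| + |f₁₂ b d|)) := by
        gcongr
        exact abs_integral_sub_mul_integral_sub_mul_le hab hcd (hh.mono hsub) hconv
    _ = _ := by
        field_simp
        ring
end
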